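/- arXiv:1501.01522 — 3 statements merged into one kernel-verified Lean document; each statement's English description precedes it below -/
import Mathlib

section
/- Let A be a finite set of positive integers with largest element n, and let A' = {0,1,…,n} \ A be its complement in I_n. Then the β-set of the conjugate of λ_A equals n − A' = {n − a' : a' ∈ A'}. -/
/-- A partition: weakly decreasing list of positive integers. -/
def IsPartition (l : List ℕ) : Prop :=
  l.Pairwise (· ≥ ·) ∧ ∀ x ∈ l, 0 < x

/-- The conjugate partition: `λ'ᵢ = #{j : λⱼ ≥ i}` (0-indexed). -/
def conjugatePart (l : List ℕ) : List ℕ :=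
  (List.range (l.headD 0)).map (fun i => (l.filter (fun p => decide (i + 1 ≤ p))).length)

/-- The multiset of hook lengths of the Young diagram of `l` (rows and columns 0-indexed):
`h(i,j) = λᵢ - j + #{i' > i : λᵢ' > j}`. -/
def hooks (l : List ℕ) : Multiset ℕ :=
  ((List.range l.length).flatMap (fun i =>
    (List.range (l.getD i 0)).map (fun j =>
      l.getD i 0 - j + ((l.drop (i + 1)).filter (fun p => decide (j < p))).length)) : List ℕ)

/-- The β-set `{λᵢ + m - i : 1 ≤ i ≤ m}` (here 0-indexed: `λᵢ + (m - 1 - i)`). -/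
def betaSet (l : List ℕ) : Finset ℕ :=
  ((List.range l.length).map (fun i => l.getD i 0 + (l.length - 1 - i))).toFinset

/-- `λ_A`: the partition whose β-set is `A`. -/
def partitionOfBeta (A : Finset ℕ) : List ℕ :=
  ((A.sort (· ≤ ·)).reverse).mapIdx (fun i a => a - (A.card - 1 - i))

/-- A set `S` is `n`-symmetric if `S = {n - x : x ∈ S}`. -/
def NSymm (n : ℕ) (S : Finset ℕ) : Prop :=
  S.image (fun x => n - x) = S

/-- Sum multiset `{x + y : x ∈ M, y ∈ N}` with multiplicity. -/
def msAdd (M N : Multiset ℕ) : Multiset ℕ :=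
  M.bind (fun x => N.map (fun y => x + y))

/-!
Let `B = {0,…,n} \ A` and let `rankIn S x` count the elements of `S` below `x`. The part of
`λ_A` coming from `a ∈ A` is `a - rankIn A a = rankIn B a`, the number of gaps below `a`; the
largest one is `rankIn B n = #B`, so `λ'ᵢ = #{a ∈ A | i < rankIn B a}` for `i < #B`. Since
`rankIn B` enumerates `B` by `0, …, #B - 1`, and for the gap `b` of rank `i` an `a ∈ A` has
`rankIn B a > i` iff `a > b`, the β-number `λ'ᵢ + (#B - 1 - i)` counts the elements of `A` and
of `B` above `b`, which is `n - b`.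
-/

open Finset

section Rank

variable {α : Type*} [LinearOrder α] (s : Finset α)

def rankIn (x : α) : ℕ := #{y ∈ s | y < x}

variable {s}

lemma card_filter_add_card_sdiff_filter {t : Finset α} (h : s ⊆ t) (p : α → Prop)
    [DecidablePred p] : #{y ∈ s | p y} + #{y ∈ t \ s | p y} = #{y ∈ t | p y} := by
  have hsdiff : {y ∈ t \ s | p y} = {y ∈ t | p y} \ {y ∈ s | p y} := by
    ext y
    simp only [mem_filter, mem_sdiff]
    tauto
  rw [hsdiff, add_comm]
  exact card_sdiff_add_card_eq_card (filter_subset_filter p h)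

lemma rankIn_lt_rankIn_iff {b : α} (hb : b ∈ s) (x : α) :
    rankIn s b < rankIn s x ↔ b < x := by
  constructor
  · contrapose!
    intro hxb
    exact card_le_card (monotone_filter_right s fun y _ hy => hy.trans_le hxb)
  · intro hbx
    refine card_lt_card ((ssubset_iff_of_subset ?_).2 ⟨b, ?_, ?_⟩)
    · exact monotone_filter_right s fun y _ hy => hy.trans hbx
    · simp [hb, hbx]
    · simp

lemma rankIn_lt_card {b : α} (hb : b ∈ s) : rankIn s b < #s :=
  card_lt_card (filter_ssubset.2 ⟨b, hb, lt_irrefl b⟩)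

lemma image_rankIn : s.image (rankIn s) = range #s := by
  refine eq_of_subset_of_card_le ?_ ?_
  · simp only [subset_iff, mem_image, mem_range]
    rintro _ ⟨b, hb, rfl⟩
    exact rankIn_lt_card hb
  · rw [card_range, card_image_of_injOn]
    intro a ha b hb hab
    by_contra hne
    rcases lt_or_gt_of_ne hne with h | h
    · exact (((rankIn_lt_rankIn_iff ha b).2 h).ne hab)
    · exact (((rankIn_lt_rankIn_iff hb a).2 h).ne hab.symm)

lemma rankIn_add_card_filter_gt {b : α} (hb : b ∈ s) :
    rankIn s b + 1 + #{y ∈ s | b < y} = #s := by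
  have hgt : {y ∈ s | b < y} = {y ∈ s | ¬ y < b}.erase b := by
    ext y
    simp only [mem_filter, mem_erase, not_lt]
    constructor
    · rintro ⟨hy, hby⟩
      exact ⟨hby.ne', hy, hby.le⟩
    · rintro ⟨hyb, hy, hby⟩
      exact ⟨hy, lt_of_le_of_ne hby (Ne.symm hyb)⟩
  rw [hgt, card_erase_of_mem (by simp [hb]), rankIn, add_assoc,
    Nat.add_sub_cancel' (card_pos.2 ⟨b, by simp [hb]⟩), card_filter_add_card_filter_not]

lemma rankIn_sort_getElem (k : ℕ) (hk : k < (s.sort (· ≤ ·)).length) :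
    rankIn s (s.sort (· ≤ ·))[k] = k := by
  set e := s.orderEmbOfFin rfl
  have hk' : k < #s := by rwa [length_sort] at hk
  have hek : (s.sort (· ≤ ·))[k] = e ⟨k, hk'⟩ := (orderEmbOfFin_apply s rfl ⟨k, hk'⟩).symm
  have hbelow : {y ∈ s | y < e ⟨k, hk'⟩} = (Iio ⟨k, hk'⟩).map e.toEmbedding := by
    ext y
    simp only [mem_filter, mem_map, mem_Iio, RelEmbedding.coe_toEmbedding]
    constructor
    · rintro ⟨hy, hlt⟩
      obtain ⟨j, rfl⟩ : y ∈ Set.range e := by rw [range_orderEmbOfFin]; exact hy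
      exact ⟨j, e.lt_iff_lt.1 hlt, rfl⟩
    · rintro ⟨j, hj, rfl⟩
      exact ⟨orderEmbOfFin_mem s rfl j, e.lt_iff_lt.2 hj⟩
  rw [hek, rankIn, hbelow, card_map, Fin.card_Iio]

lemma partitionOfBeta_eq_reverse_map (A : Finset ℕ) :
    partitionOfBeta A = ((A.sort (· ≤ ·)).map fun a => a - rankIn A a).reverse := by
  apply List.ext_getElem
  · simp [partitionOfBeta]
  · intro j _ _
    simp only [partitionOfBeta, List.getElem_mapIdx, List.getElem_reverse, List.getElem_map,
      length_sort, List.length_map]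
    rw [rankIn_sort_getElem]

lemma length_filter_partitionOfBeta (A : Finset ℕ) (p : ℕ → Bool) :
    ((partitionOfBeta A).filter p).length = #{a ∈ A | p (a - rankIn A a)} := by
  rw [partitionOfBeta_eq_reverse_map, List.filter_reverse, List.length_reverse, List.filter_map,
    List.length_map, card_def, filter_val, ← sort_eq A (· ≤ ·), Multiset.filter_coe,
    Multiset.coe_card]
  simp only [Function.comp_def, Bool.decide_eq_true]

lemma headD_partitionOfBeta {n : ℕ} {A : Finset ℕ} (hn : n ∈ A) (hmax : ∀ a ∈ A, a ≤ n) :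
    (partitionOfBeta A).headD 0 = n - rankIn A n := by
  have hne : A.sort (· ≤ ·) ≠ [] := List.ne_nil_of_mem ((mem_sort _).2 hn)
  have hlast : (A.sort (· ≤ ·)).getLast hne = n := by
    rw [List.getLast_eq_getElem, sorted_last_eq_max']
    exact le_antisymm (max'_le _ _ _ hmax) (le_max' _ _ hn)
  rw [partitionOfBeta_eq_reverse_map, List.headD_eq_head?_getD, List.head?_reverse,
    List.getLast?_map, List.getLast?_eq_some_getLast hne, hlast]
  rfl

lemma betaSet_map_range (f : ℕ → ℕ) (L : ℕ) :
    betaSet ((List.range L).map f) = (range L).image fun i => f i + (L - 1 - i) := by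
  ext x
  simp only [betaSet, List.length_map, List.length_range, List.mem_toFinset, List.mem_map,
    List.mem_range, mem_image, mem_range]
  refine exists_congr fun i => and_congr_right fun hi => ?_
  rw [List.getD_eq_getElem _ _ (by simpa using hi), List.getElem_map, List.getElem_range]

lemma rankIn_range {n x : ℕ} (hx : x ≤ n) : rankIn (range n) x = x := by
  have hbelow : {y ∈ range n | y < x} = range x := by
    ext y
    simp only [mem_filter, mem_range]
    omega
  rw [rankIn, hbelow, card_range]

lemma sub_rankIn_eq_rankIn_sdiff {n : ℕ} {A : Finset ℕ} (hA : A ⊆ range n) {x : ℕ}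
    (hx : x ≤ n) : x - rankIn A x = rankIn (range n \ A) x := by
  have hsplit := card_filter_add_card_sdiff_filter hA (· < x)
  rw [← rankIn, ← rankIn, ← rankIn, rankIn_range hx] at hsplit
  omega

section Complement

variable {n : ℕ} {A : Finset ℕ}

lemma conjugatePart_partitionOfBeta (hn : n ∈ A) (hmax : ∀ a ∈ A, a ≤ n) :
    conjugatePart (partitionOfBeta A) = (List.range #(range (n + 1) \ A)).map
      fun i => #{a ∈ A | i < rankIn (range (n + 1) \ A) a} := by
  have hA : A ⊆ range (n + 1) := fun a ha => mem_range.2 (Nat.lt_succ_of_le (hmax a ha))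
  have hhead : rankIn (range (n + 1) \ A) n = #(range (n + 1) \ A) := by
    refine congrArg card (filter_true_of_mem fun b hb => ?_)
    simp only [mem_sdiff, mem_range] at hb
    exact lt_of_le_of_ne (Nat.le_of_lt_succ hb.1) fun hbn => hb.2 (hbn ▸ hn)
  rw [conjugatePart, headD_partitionOfBeta hn hmax, sub_rankIn_eq_rankIn_sdiff hA n.le_succ, hhead]
  refine List.map_congr_left fun i _ => ?_
  rw [length_filter_partitionOfBeta]
  refine congrArg card (filter_congr fun a ha => ?_)
  rw [sub_rankIn_eq_rankIn_sdiff hA (hmax a ha |>.trans n.le_succ), decide_eq_true_iff]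
  omega

lemma card_filter_rankIn_lt_add_eq (hmax : ∀ a ∈ A, a ≤ n) {b : ℕ}
    (hb : b ∈ range (n + 1) \ A) :
    #{a ∈ A | rankIn (range (n + 1) \ A) b < rankIn (range (n + 1) \ A) a}
      + (#(range (n + 1) \ A) - 1 - rankIn (range (n + 1) \ A) b) = n - b := by
  have hA : A ⊆ range (n + 1) := fun a ha => mem_range.2 (Nat.lt_succ_of_le (hmax a ha))
  have habove := rankIn_add_card_filter_gt hb
  have hsplit := card_filter_add_card_sdiff_filter hA (b < ·)
  have hIoc : {x ∈ range (n + 1) | b < x} = Ioc b n := by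
    ext x
    simp only [mem_filter, mem_range, mem_Ioc]
    omega
  rw [hIoc, Nat.card_Ioc] at hsplit
  simp only [rankIn_lt_rankIn_iff hb]
  omega

end Complement

theorem stmt_3_general (n : ℕ) (A : Finset ℕ) (hn : n ∈ A)
    (hmax : ∀ a ∈ A, a ≤ n) :
    betaSet (conjugatePart (partitionOfBeta A)) =
      (Finset.range (n + 1) \ A).image (fun a => n - a) := by
  rw [conjugatePart_partitionOfBeta hn hmax, betaSet_map_range, ← image_rankIn, image_image]
  exact image_congr fun b hb => card_filter_rankIn_lt_add_eq hmax hb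

/-- If `A` is a finite set of positive integers with largest element `n` and
`A' = {0,…,n} \ A`, then the β-set of the conjugate of `λ_A` is `n - A'`. -/
theorem stmt_3 (n : ℕ) (A : Finset ℕ) (hpos : ∀ a ∈ A, 0 < a) (hn : n ∈ A)
    (hmax : ∀ a ∈ A, a ≤ n) :
    betaSet (conjugatePart (partitionOfBeta A)) =
      (Finset.range (n + 1) \ A).image (fun a => n - a) :=
  stmt_3_general n A hn hmax
end Rank
end

section
/- Let A, B ⊆ {1,…,n} with n ∈ A ∩ B, A' = I_n \ A, B' = I_n \ B. Set C = A \ B, D = B \ A, and suppose C = n − C and D = n − D. Then for every k with 1 ≤ k ≤ n, the multiplicity of k in H(λ_A) minus the multiplicity of k in H(λ_B) equals (C + (n − A'))_{n+k} − (B + C)_{n+k} − (D + (n − A'))_{n+k} + (D + B)_{n+k}, where for multisets M, N of integers, M + N = {x + y : x ∈ M, y ∈ N} (with multiplicity) and M_k denotes the multiplicity of k in M. -/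
open Finset

lemma reverse_sort_le {α : Type*} [LinearOrder α] (s : Finset α) :
    (s.sort (· ≤ ·)).reverse = s.sort (· ≥ ·) :=
  List.Perm.eq_of_pairwise' (r := (· ≥ ·))
    (List.pairwise_reverse.mpr (s.pairwise_sort _)) (s.pairwise_sort _)
    ((List.reverse_perm _).trans (by rw [← Multiset.coe_eq_coe, sort_eq, sort_eq]))

lemma partitionOfBeta_insert {a : ℕ} {S : Finset ℕ} (h : ∀ x ∈ S, x < a) :
    partitionOfBeta (insert a S) = (a - #S) :: partitionOfBeta S := by
  have ha : a ∉ S := fun ha => (h a ha).false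
  rw [partitionOfBeta, partitionOfBeta, reverse_sort_le, reverse_sort_le,
    sort_insert _ (fun x hx => (h x hx).le) ha, List.mapIdx_cons, card_insert_of_notMem ha]
  congr 2
  funext i x
  omega

lemma hooks_cons (x : ℕ) (t : List ℕ) :
    hooks (x :: t) =
      ((List.range x).map fun j => x - j + (t.filter fun p => decide (j < p)).length : List ℕ)
        + hooks t := by
  rw [hooks, hooks, List.length_cons, List.range_succ_eq_map, List.flatMap_cons,
    List.flatMap_map, ← Multiset.coe_add]
  rfl

lemma count_notMem_add_card_filter_lt (S : Finset ℕ) (x : ℕ) :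
    Nat.count (· ∉ S) x + #{s ∈ S | s < x} = x := by
  have hS : #{s ∈ S | s < x} = #{y ∈ range x | y ∈ S} := by
    congr 1; ext y; simp [and_comm]
  rw [Nat.count_eq_card_filter_range, hS, add_comm, card_filter_add_card_filter_not,
    card_range]

lemma count_notMem_insert_of_le {a x : ℕ} {S : Finset ℕ} (hx : x ≤ a) :
    Nat.count (· ∉ insert a S) x = Nat.count (· ∉ S) x := by
  simp only [Nat.count_eq_card_filter_range]
  congr 1
  refine filter_congr fun y hy => ?_
  simp only [mem_insert, not_or, and_iff_right_iff_imp]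
  rintro - rfl
  have := mem_range.mp hy
  omega

lemma coe_partitionOfBeta (A : Finset ℕ) :
    (partitionOfBeta A : Multiset ℕ) = A.val.map (Nat.count (· ∉ A)) := by
  induction A using Finset.induction_on_max with
  | empty => simp [partitionOfBeta]
  | insert a S h ih =>
    have ha : a ∉ S := fun ha => (h a ha).false
    have hcount : Nat.count (· ∉ S) a = a - #S := by
      have := count_notMem_add_card_filter_lt S a
      rw [filter_true_of_mem h] at this
      omega
    rw [partitionOfBeta_insert h, ← Multiset.cons_coe, ih, insert_val_of_notMem ha,
      Multiset.map_cons, count_notMem_insert_of_le le_rfl, hcount]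
    congr 1
    exact Multiset.map_congr rfl fun x hx => (count_notMem_insert_of_le (h x hx).le).symm

lemma length_filter_partitionOfBeta_s9 (S : Finset ℕ) (j : ℕ) :
    ((partitionOfBeta S).filter fun p => decide (j < p)).length
      = #{s ∈ S | j < Nat.count (· ∉ S) s} := by
  rw [← Multiset.coe_card, ← Multiset.filter_coe, coe_partitionOfBeta, Multiset.filter_map,
    Multiset.card_map]
  rfl

lemma image_count_notMem_range_sdiff (S : Finset ℕ) (a : ℕ) :
    (range a \ S).image (Nat.count (· ∉ S)) = range (Nat.count (· ∉ S) a) := by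
  have hT : range a \ S = {x ∈ range a | x ∉ S} := sdiff_eq_filter _ _
  have hinj : Set.InjOn (Nat.count (· ∉ S)) ↑(range a \ S) := fun x hx y hy =>
    Nat.count_injective (mem_sdiff.mp hx).2 (mem_sdiff.mp hy).2
  refine eq_of_subset_of_card_le (fun z hz => ?_) ?_
  · obtain ⟨x, hx, rfl⟩ := mem_image.mp hz
    rw [mem_sdiff, mem_range] at hx
    exact mem_range.mpr (Nat.count_strict_mono hx.2 hx.1)
  · rw [card_image_of_injOn hinj, card_range, hT, Nat.count_eq_card_filter_range]

lemma hook_of_gap {a x : ℕ} {S : Finset ℕ} (h : ∀ s ∈ S, s < a) (hx : x ∈ range a \ S) :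
    a - #S - Nat.count (· ∉ S) x + #{s ∈ S | Nat.count (· ∉ S) x < Nat.count (· ∉ S) s}
      = a - x := by
  rw [mem_sdiff, mem_range] at hx
  have hgt : {s ∈ S | Nat.count (· ∉ S) x < Nat.count (· ∉ S) s} = {s ∈ S | x < s} :=
    filter_congr fun s hs => ⟨fun hc => lt_of_le_of_ne
      (le_of_not_gt fun hsx => (Nat.count_monotone _ hsx.le).not_gt hc)
      (fun hxs => hx.2 (hxs ▸ hs)), Nat.count_strict_mono hx.2⟩
  have hsplit : #{s ∈ S | x < s} + #{s ∈ S | s < x} = #S := by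
    rw [← card_filter_add_card_filter_not (s := S) (fun s => x < s)]
    congr 2
    exact filter_congr fun s hs => by
      have : s ≠ x := fun hsx => hx.2 (hsx ▸ hs)
      omega
  have hcx := count_notMem_add_card_filter_lt S x
  have hca := count_notMem_add_card_filter_lt S a
  rw [filter_true_of_mem h] at hca
  have hlt := Nat.count_strict_mono hx.2 hx.1 (p := (· ∉ S))
  rw [hgt]
  omega

lemma row_hooks {a : ℕ} {S : Finset ℕ} (h : ∀ s ∈ S, s < a) :
    (((List.range (a - #S)).map fun j =>
        a - #S - j + #{s ∈ S | j < Nat.count (· ∉ S) s} : List ℕ) : Multiset ℕ)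
      = (range a \ S).val.map (a - ·) := by
  have hca := count_notMem_add_card_filter_lt S a
  rw [filter_true_of_mem h] at hca
  have hinj : Set.InjOn (Nat.count (· ∉ S)) ↑(range a \ S) := fun x hx y hy =>
    Nat.count_injective (mem_sdiff.mp hx).2 (mem_sdiff.mp hy).2
  have hrange : Multiset.range (a - #S) = (range a \ S).val.map (Nat.count (· ∉ S)) := by
    rw [← image_val_of_injOn hinj, image_count_notMem_range_sdiff, range_val]
    congr 1
    omega
  rw [← Multiset.map_coe, Multiset.coe_range, hrange, Multiset.map_map]
  exact Multiset.map_congr rfl fun x hx => hook_of_gap h hx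

lemma range_sdiff_insert_of_le {a b : ℕ} (S : Finset ℕ) (hb : b ≤ a) :
    range b \ insert a S = range b \ S := by
  ext x
  simp only [mem_sdiff, mem_range, mem_insert, not_or]
  constructor
  · exact fun h => ⟨h.1, h.2.2⟩
  · exact fun h => ⟨h.1, by omega, h.2⟩

theorem hooks_partitionOfBeta (A : Finset ℕ) :
    hooks (partitionOfBeta A) = A.val.bind fun a => (range a \ A).val.map (a - ·) := by
  induction A using Finset.induction_on_max with
  | empty => simp [partitionOfBeta, hooks]
  | insert a S h ih =>
    have ha : a ∉ S := fun ha => (h a ha).false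
    rw [partitionOfBeta_insert h, hooks_cons, ih, insert_val_of_notMem ha, Multiset.cons_bind,
      range_sdiff_insert_of_le S le_rfl, ← row_hooks h]
    simp only [length_filter_partitionOfBeta_s9]
    congr 1
    exact Multiset.bind_congr fun s hs => by rw [range_sdiff_insert_of_le S (h s hs).le]

def diffCount (k : ℕ) (X Y : Finset ℕ) : ℕ :=
  ∑ a ∈ X, #{y ∈ Y | a = y + k}

lemma count_hooks_partitionOfBeta {N k : ℕ} {A : Finset ℕ} (hA : A ⊆ range N) (hk : 0 < k) :
    (hooks (partitionOfBeta A)).count k = diffCount k A (range N \ A) := by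
  rw [hooks_partitionOfBeta, Multiset.count_bind, diffCount, sum_eq_multiset_sum]
  refine congrArg Multiset.sum (Multiset.map_congr rfl fun a ha => ?_)
  have haN := mem_range.mp (hA ha)
  rw [Multiset.count_map, ← filter_val, ← card_def]
  congr 1
  ext y
  simp only [mem_filter, mem_sdiff, mem_range]
  constructor <;> rintro ⟨⟨hy, hyA⟩, hay⟩ <;> exact ⟨⟨by omega, hyA⟩, by omega⟩

lemma msAdd_comm (M N : Multiset ℕ) : msAdd M N = msAdd N M := by
  simp only [msAdd, Multiset.bind_map_comm M N, add_comm]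

lemma count_msAdd_image_sub {n : ℕ} (k : ℕ) (X : Finset ℕ) {Y : Finset ℕ}
    (hY : ∀ y ∈ Y, y ≤ n) :
    (msAdd X.val (Y.image (n - ·)).val).count (n + k) = diffCount k X Y := by
  have hinj : Set.InjOn (n - ·) (Y : Set ℕ) := fun x hx y hy (hxy : n - x = n - y) => by
    have := hY x hx; have := hY y hy; omega
  rw [msAdd, image_val_of_injOn hinj, Multiset.count_bind, diffCount, sum_eq_multiset_sum]
  refine congrArg Multiset.sum (Multiset.map_congr rfl fun a _ => ?_)
  rw [Multiset.map_map, Multiset.count_map, ← filter_val, ← card_def]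
  refine congrArg card (filter_congr fun y hy => ?_)
  have := hY y hy
  simp only [Function.comp_apply]
  omega

lemma NSymm.le {n : ℕ} {S : Finset ℕ} (hS : NSymm n S) : ∀ x ∈ S, x ≤ n := by
  intro x hx
  rw [← (hS : S.image (n - ·) = S)] at hx
  obtain ⟨y, -, rfl⟩ := mem_image.mp hx
  exact Nat.sub_le n y

lemma count_msAdd_of_nSymm {n : ℕ} (k : ℕ) (X : Finset ℕ) {S : Finset ℕ} (hS : NSymm n S) :
    (msAdd X.val S.val).count (n + k) = diffCount k X S := by
  have := count_msAdd_image_sub k X hS.le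
  rwa [(hS : S.image (n - ·) = S)] at this

lemma diffCount_eq_sum_indicator (k : ℕ) {P X Y : Finset ℕ} (hX : X ⊆ P) (hY : Y ⊆ P) :
    (diffCount k X Y : ℤ) = ∑ a ∈ P, ∑ y ∈ P,
      (if a ∈ X then 1 else 0) * (if y ∈ Y then 1 else 0) * (if a = y + k then 1 else 0) := by
  rw [diffCount, ← sum_subset hX fun a _ ha => by simp [ha]]
  push_cast
  refine sum_congr rfl fun a ha => ?_
  rw [← sum_subset hY fun y _ hy => by simp [hy], card_filter]
  push_cast
  refine sum_congr rfl fun y hy => ?_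
  simp [ha, hy]

lemma ite_mem_sdiff {α : Type*} [DecidableEq α] (X Y : Finset α) (a : α) :
    (if a ∈ X \ Y then (1 : ℤ) else 0)
      = (if a ∈ X then 1 else 0) * (1 - if a ∈ Y then 1 else 0) := by
  by_cases a ∈ X <;> by_cases a ∈ Y <;> simp [*]

lemma diffCount_sub_diffCount (k : ℕ) {P A B : Finset ℕ} (hA : A ⊆ P) (hB : B ⊆ P) :
    (diffCount k A (P \ A) : ℤ) - diffCount k B (P \ B)
      = (diffCount k (A \ B) (P \ A) : ℤ) - diffCount k B (A \ B)
        - diffCount k (B \ A) (P \ A) + diffCount k B (B \ A) := by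
  have hAB : A \ B ⊆ P := sdiff_subset.trans hA
  have hBA : B \ A ⊆ P := sdiff_subset.trans hB
  rw [diffCount_eq_sum_indicator k hA sdiff_subset, diffCount_eq_sum_indicator k hB sdiff_subset,
    diffCount_eq_sum_indicator k hAB sdiff_subset, diffCount_eq_sum_indicator k hB hAB,
    diffCount_eq_sum_indicator k hBA sdiff_subset, diffCount_eq_sum_indicator k hB hBA]
  simp only [← sum_sub_distrib, ← sum_add_distrib]
  refine sum_congr rfl fun _ _ => sum_congr rfl fun y hy => ?_
  simp only [ite_mem_sdiff, if_pos hy]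
  ring

theorem stmt_9_general (n : ℕ) (A B : Finset ℕ) (hA : A ⊆ Finset.Icc 1 n) (hB : B ⊆ Finset.Icc 1 n)
    (hC : NSymm n (A \ B)) (hD : NSymm n (B \ A)) :
    ∀ k : ℕ, 1 ≤ k → k ≤ n →
      ((hooks (partitionOfBeta A)).count k : ℤ) - ((hooks (partitionOfBeta B)).count k : ℤ) =
        ((msAdd (A \ B).val ((Finset.range (n + 1) \ A).image (fun a => n - a)).val).count (n + k) : ℤ)
        - ((msAdd B.val (A \ B).val).count (n + k) : ℤ)
        - ((msAdd (B \ A).val ((Finset.range (n + 1) \ A).image (fun a => n - a)).val).count (n + k) : ℤ)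
        + ((msAdd (B \ A).val B.val).count (n + k) : ℤ) := by
  intro k hk _
  have hIcc : Icc 1 n ⊆ range (n + 1) := fun x hx => by
    simp only [mem_Icc, mem_range] at hx ⊢; omega
  have hA' : ∀ y ∈ range (n + 1) \ A, y ≤ n := fun y hy =>
    Nat.lt_succ_iff.mp (mem_range.mp (mem_sdiff.mp hy).1)
  rw [count_hooks_partitionOfBeta (hA.trans hIcc) hk,
    count_hooks_partitionOfBeta (hB.trans hIcc) hk, count_msAdd_image_sub k _ hA',
    count_msAdd_of_nSymm k B hC, count_msAdd_image_sub k _ hA',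
    msAdd_comm, count_msAdd_of_nSymm k B hD]
  exact diffCount_sub_diffCount k (hA.trans hIcc) (hB.trans hIcc)

/-- Step 2: the multiplicity identity. With `C = A \ B`, `D = B \ A`, `A' = I_n \ A`,
and `C`, `D` `n`-symmetric, for all `1 ≤ k ≤ n`:
`H(λ_A)_k - H(λ_B)_k = (C + (n - A'))_{n+k} - (B + C)_{n+k} - (D + (n - A'))_{n+k} + (D + B)_{n+k}`. -/
theorem stmt_9 (n : ℕ) (A B : Finset ℕ) (hA : A ⊆ Finset.Icc 1 n) (hB : B ⊆ Finset.Icc 1 n)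
    (hnA : n ∈ A) (hnB : n ∈ B)
    (hC : NSymm n (A \ B)) (hD : NSymm n (B \ A)) :
    ∀ k : ℕ, 1 ≤ k → k ≤ n →
      ((hooks (partitionOfBeta A)).count k : ℤ) - ((hooks (partitionOfBeta B)).count k : ℤ) =
        ((msAdd (A \ B).val ((Finset.range (n + 1) \ A).image (fun a => n - a)).val).count (n + k) : ℤ)
        - ((msAdd B.val (A \ B).val).count (n + k) : ℤ)
        - ((msAdd (B \ A).val ((Finset.range (n + 1) \ A).image (fun a => n - a)).val).count (n + k) : ℤ)
        + ((msAdd (B \ A).val B.val).count (n + k) : ℤ) :=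
  stmt_9_general n A B hA hB hC hD
end

section
/- For any n ≥ 0, the partitions λ_n = (n+6, n+3, n+3, 2) and μ_n = (n+5, n+5, n+2, 1, 1) are not conjugate to each other but have the same hook multiset: H(λ_n) = H(μ_n). -/
open Multiset

theorem Multiset.map_const_sub_Ico {m p q : ℕ} (hp : p ≤ m) (hq : q ≤ m + 1) :
    (Ico p q).map (m - ·) = Ico (m + 1 - q) (m + 1 - p) := by
  rw [Ico, Ico, ← Nat.Ico_image_const_sub_eq_Ico hp, Finset.image_val_of_injOn]
  intro x hx y hy hxy
  simp only [Finset.coe_Ico, Set.mem_Ico] at hx hy hxy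
  omega

theorem Multiset.range_eq_Ico (a : ℕ) : range a = Ico 0 a :=
  congrArg Finset.val (Nat.Ico_zero_eq_range a).symm

theorem Multiset.Ico_add_Ico_eq_Ico_add_Ico {α : Type*} [LinearOrder α] [LocallyFiniteOrder α]
    {a b c d : α} (hac : a ≤ c) (hbc : b ≤ c) (hcd : c ≤ d) :
    Ico a d + Ico b c = Ico a c + Ico b d := by
  rw [← Ico_add_Ico_eq_Ico hac hcd, ← Ico_add_Ico_eq_Ico hbc hcd, add_right_comm, add_assoc]

/-- The hook length of the cell in column `j` of a row of length `a` lying above the rows `l`. -/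
def rowHook (a : ℕ) (l : List ℕ) (j : ℕ) : ℕ :=
  a - j + (l.filter (j < ·)).length

def rowHooks (a : ℕ) (l : List ℕ) : Multiset ℕ :=
  (range a).map (rowHook a l)

theorem hooks_nil : hooks [] = 0 := rfl

theorem hooks_cons_s10 (a : ℕ) (l : List ℕ) : hooks (a :: l) = rowHooks a l + hooks l := by
  simp only [hooks, rowHooks, List.length_cons, List.range_succ_eq_map, List.flatMap_cons,
    List.flatMap_map, List.getD_cons_zero, List.getD_cons_succ, List.drop_succ_cons, List.drop_zero,
    ← Multiset.coe_add, Multiset.range, Multiset.map_coe]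
  rfl

theorem rowHooks_nil (a : ℕ) : rowHooks a [] = Ico 1 (a + 1) := by
  rw [rowHooks, range_eq_Ico, map_congr rfl fun j _ => (by simp [rowHook] : rowHook a [] j = a - j),
    map_const_sub_Ico (Nat.zero_le a) (Nat.le_succ a), Nat.add_sub_cancel_left, Nat.sub_zero]

theorem rowHooks_cons {a b c : ℕ} {l : List ℕ} (hba : b ≤ a) (hc : a + 1 - b = c)
    (hl : ∀ x ∈ l, x ≤ b) : rowHooks a (b :: l) = Ico 1 c + (rowHooks b l).map (· + c) := by
  subst hc
  have below (j : ℕ) (hj : j < b) : rowHook a (b :: l) j = rowHook b l j + (a + 1 - b) := by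
    simp only [rowHook, List.filter_cons, decide_eq_true hj, if_true, List.length_cons]
    omega
  have beyond (j : ℕ) (hj : b ≤ j) : rowHook a (b :: l) j = a - j := by
    have : (b :: l).filter (j < ·) = [] := List.filter_eq_nil_iff.2 fun x hx => by grind
    simp [rowHook, this]
  rw [rowHooks, range_eq_Ico, ← Ico_add_Ico_eq_Ico (Nat.zero_le b) hba, map_add, add_comm,
    rowHooks, range_eq_Ico, map_map]
  congr 1
  · rw [map_congr rfl fun j hj => beyond j (mem_Ico.1 hj).1,
      map_const_sub_Ico hba (Nat.le_succ a), Nat.add_sub_cancel_left]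
  · exact map_congr rfl fun j hj => below j (mem_Ico.1 hj).2

theorem hooks_lambda (n : ℕ) :
    hooks [n + 6, n + 3, n + 3, 2] =
      Ico 2 (n + 6) + Ico (n + 4) (n + 5) + Ico 1 3 + Ico 1 4 + Ico 1 (n + 2) + Ico 6 (n + 7) +
        Ico (n + 8) (n + 10) := by
  rw [Ico_add_Ico_eq_Ico_add_Ico (show 2 ≤ n + 5 by omega) (show n + 4 ≤ n + 5 by omega)
      (show n + 5 ≤ n + 6 by omega),
    ← Ico_add_Ico_eq_Ico (show 2 ≤ n + 3 by omega) (show n + 3 ≤ n + 5 by omega)]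
  simp only [hooks_cons_s10, hooks_nil, add_zero]
  rw [rowHooks_cons (c := 4) (by omega) (by omega) (by simp),
    rowHooks_cons (c := 1) (by omega) (by omega) (by simp),
    rowHooks_cons (c := n + 2) (by omega) (by omega) (by simp), rowHooks_nil]
  simp only [map_add, map_add_right_Ico, Ico_self, zero_add]
  ring_nf
  abel

theorem hooks_mu (n : ℕ) :
    hooks [n + 5, n + 5, n + 2, 1, 1] =
      Ico 2 (n + 6) + Ico (n + 4) (n + 5) + Ico 1 3 + Ico 1 4 + Ico 1 (n + 2) + Ico 6 (n + 7) +
        Ico (n + 8) (n + 10) := by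
  rw [← Ico_add_Ico_eq_Ico (show 1 ≤ 2 by omega) (show 2 ≤ 3 by omega),
    ← Ico_add_Ico_eq_Ico (show 2 ≤ 5 by omega) (show 5 ≤ n + 6 by omega),
    ← Ico_add_Ico_eq_Ico (show n + 8 ≤ n + 9 by omega) (show n + 9 ≤ n + 10 by omega)]
  simp only [hooks_cons_s10, hooks_nil, add_zero]
  rw [rowHooks_cons (c := 1) (by omega) (by omega) (by simp),
    rowHooks_cons (c := 4) (by omega) (by omega) (by simp),
    rowHooks_cons (c := n + 2) (by omega) (by omega) (by simp),
    rowHooks_cons (c := 1) (by omega) (by omega) (by simp), rowHooks_nil]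
  simp only [map_add, map_add_right_Ico, Ico_self, zero_add]
  ring_nf
  abel

theorem length_conjugatePart (l : List ℕ) : (conjugatePart l).length = l.headD 0 := by
  simp [conjugatePart]

/-- Herman–Chung: for every `n`, the partitions `(n+6, n+3, n+3, 2)` and
`(n+5, n+5, n+2, 1, 1)` are not conjugate but have the same hook multiset. -/
theorem stmt_10 (n : ℕ) :
    conjugatePart [n + 6, n + 3, n + 3, 2] ≠ [n + 5, n + 5, n + 2, 1, 1] ∧
    hooks [n + 6, n + 3, n + 3, 2] = hooks [n + 5, n + 5, n + 2, 1, 1] := by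
  refine ⟨fun h => ?_, (hooks_lambda n).trans (hooks_mu n).symm⟩
  have hlen := congrArg List.length h
  simp [length_conjugatePart] at hlen
end
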